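/- arXiv:math/0302139 — 2 statements merged into one kernel-verified Lean document; each statement's English description precedes it below -/
import Mathlib

section
/- If p is a prime with p ≡ 13 or 23 (mod 24), then there is no natural number m such that 2 + 3^m ≡ 0 (mod p). -/
lemma not_isSquare_two_zmod_three : ¬ IsSquare (2 : ZMod 3) := by decide


theorem no_two_add_three_pow_cong_zero (p : ℕ) (hp : p.Prime)
    (h : p % 24 = 13 ∨ p % 24 = 23) :
    ¬ ∃ m : ℕ, (2 + 3 ^ m : ℤ) ≡ 0 [ZMOD p] := by
  haveI : Fact p.Prime := ⟨hp⟩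
  haveI : Fact (Nat.Prime 3) := ⟨by norm_num⟩
  have hp2 : p ≠ 2 := by rcases h with h | h <;> omega
  -- 3 is a square mod p
  have h3 : IsSquare (3 : ZMod p) := by
    rcases h with h | h
    · have h4 : p % 4 = 1 := by omega
      have key := (ZMod.exists_sq_eq_prime_iff_of_mod_four_eq_one (q := 3) h4 (by norm_num)).mpr
      rw [show ((3 : ℕ) : ZMod p) = (3 : ZMod p) by push_cast; ring] at key
      apply key
      have hcast : ((p : ℕ) : ZMod 3) = 1 := by
        have e : (p : ZMod 3) = ((p % 3 : ℕ) : ZMod 3) := (ZMod.natCast_mod p 3).symm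
        rw [e, show p % 3 = 1 by omega]; norm_num
      rw [hcast]; exact IsSquare.one
    · have h4 : p % 4 = 3 := by omega
      have hne : p ≠ 3 := by omega
      have key := (ZMod.exists_sq_eq_prime_iff_of_mod_four_eq_three h4 (by norm_num) hne).mpr
      rw [show ((3 : ℕ) : ZMod p) = (3 : ZMod p) by push_cast; ring] at key
      apply key
      have hcast : ((p : ℕ) : ZMod 3) = 2 := by
        have e : (p : ZMod 3) = ((p % 3 : ℕ) : ZMod 3) := (ZMod.natCast_mod p 3).symm
        rw [e, show p % 3 = 2 by omega]; norm_num
      rw [hcast]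
      exact not_isSquare_two_zmod_three
  rintro ⟨m, hm⟩
  have hdvd : (p : ℤ) ∣ (2 + 3 ^ m) := (Int.modEq_zero_iff_dvd).mp hm
  have h0 : ((2 + 3 ^ m : ℤ) : ZMod p) = 0 :=
    (ZMod.intCast_zmod_eq_zero_iff_dvd _ p).mpr hdvd
  push_cast at h0
  have hpow : (3 : ZMod p) ^ m = -2 := by linear_combination h0
  have hneg2 : IsSquare (-2 : ZMod p) := hpow ▸ h3.pow m
  have h2ne : (2 : ZMod p) ≠ 0 := by
    intro h20
    have : (p : ℕ) ∣ 2 := by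
      have := (ZMod.natCast_eq_zero_iff 2 p).mp (by exact_mod_cast h20)
      exact this
    exact hp2 ((Nat.prime_dvd_prime_iff_eq hp Nat.prime_two).mp this)
  rcases h with h | h
  · have hm1 : IsSquare (-1 : ZMod p) := (ZMod.exists_sq_eq_neg_one_iff).mpr (by omega)
    have h2 : IsSquare (2 : ZMod p) := by
      have := hm1.mul hneg2
      rwa [show (-1 : ZMod p) * (-2) = 2 by ring] at this
    have := (ZMod.exists_sq_eq_two_iff hp2).mp h2
    omega
  · have h2 : IsSquare (2 : ZMod p) :=
      (ZMod.exists_sq_eq_two_iff hp2).mpr (by omega)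
    have hm1 : IsSquare (-1 : ZMod p) := by
      have hinv : IsSquare ((2 : ZMod p)⁻¹) := h2.inv
      have := hneg2.mul hinv
      rwa [show (-2 : ZMod p) * 2⁻¹ = -(2 * 2⁻¹) by ring, mul_inv_cancel₀ h2ne] at this
    have := (ZMod.exists_sq_eq_neg_one_iff (p := p)).mp hm1
    omega
end

section
/- The set of primes p for which there exists m ≥ 2 with p dividing 2 + 3^m is infinite, and its complement within the set of all primes is also infinite. -/
lemma aux_no_div_13 (p : ℕ) (hp : p.Prime) (h24 : p % 24 = 13) :
    ¬ ∃ m : ℕ, 2 ≤ m ∧ (p : ℤ) ∣ 2 + 3 ^ m := by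
  haveI : Fact p.Prime := ⟨hp⟩
  rintro ⟨m, hm, hdvd⟩
  have hp2 : p ≠ 2 := by rintro rfl; omega
  have hp4 : p % 4 = 1 := by omega
  have hp8 : p % 8 = 5 := by omega
  have hp3 : p % 3 = 1 := by omega
  -- In ZMod p, 3^m = -2
  have hz : ((2 + 3 ^ m : ℤ) : ZMod p) = 0 :=
    (ZMod.intCast_zmod_eq_zero_iff_dvd _ p).mpr hdvd
  push_cast at hz
  have h3m : (3 : ZMod p) ^ m = -2 := by linear_combination hz
  -- 3 is a square mod p
  have hsq3 : IsSquare (3 : ZMod p) := by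
    have h := ZMod.exists_sq_eq_prime_iff_of_mod_four_eq_one (p := p) (q := 3) hp4 (by norm_num)
    rw [show ((3 : ℕ) : ZMod p) = (3 : ZMod p) by push_cast; ring] at h
    rw [h]
    have : ((p : ℕ) : ZMod 3) = 1 := by
      rw [← Nat.cast_one, ← hp3, ZMod.natCast_mod]
    rw [this]
    exact IsSquare.one
  -- hence -2 is a square
  have hsqneg2 : IsSquare (-2 : ZMod p) := h3m ▸ hsq3.pow m
  -- -1 is a square
  have hsqneg1 : IsSquare (-1 : ZMod p) := by
    rw [ZMod.exists_sq_eq_neg_one_iff]; omega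
  -- so 2 is a square, contradiction
  have hsq2 : IsSquare (2 : ZMod p) := by
    have := hsqneg1.mul hsqneg2
    rwa [show (-1 : ZMod p) * (-2) = 2 by ring] at this
  rw [ZMod.exists_sq_eq_two_iff hp2] at hsq2
  omega

lemma aux_part1 :
    {p : ℕ | p.Prime ∧ ∃ m : ℕ, 2 ≤ m ∧ (p : ℤ) ∣ 2 + 3 ^ m}.Infinite := by
  by_contra hfin
  rw [Set.not_infinite] at hfin
  set F := hfin.toFinset with hF
  have hmemF : ∀ q : ℕ, q.Prime → (∃ m : ℕ, 2 ≤ m ∧ (q : ℤ) ∣ 2 + 3 ^ m) → q ∈ F := by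
    intro q hq hqm
    rw [hF, Set.Finite.mem_toFinset]
    exact ⟨hq, hqm⟩
  have h11 : (11 : ℕ) ∈ F := hmemF 11 (by norm_num) ⟨2, le_refl 2, by norm_num⟩
  set Q := ∏ p ∈ F, p ^ 2 with hQ
  have hQpos : 0 < Q := by
    apply Finset.prod_pos
    intro p hpF
    have hp : p.Prime := ((Set.Finite.mem_toFinset hfin).mp hpF).1
    exact pow_pos hp.pos 2
  have hcop : Nat.Coprime 3 Q := by
    apply Nat.Coprime.prod_right
    intro p hpF
    obtain ⟨hp, m, hm, hdvd⟩ := (Set.Finite.mem_toFinset hfin).mp hpF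
    have hpne3 : p ≠ 3 := by
      rintro rfl
      have : (3 : ℤ) ∣ 2 := by
        have h3 : (3 : ℤ) ∣ 3 ^ m := dvd_pow_self 3 (by omega)
        have := dvd_sub hdvd h3
        simpa using this
      norm_num at this
    exact (Nat.Coprime.pow_right 2 ((Nat.coprime_primes (by norm_num) hp).mpr (Ne.symm hpne3)))
  set t := Nat.totient Q with ht
  have ht1 : 1 ≤ t := Nat.totient_pos.mpr hQpos
  set m := 2 + t with hmdef
  set v := 2 + 3 ^ m with hvdef
  have hv29 : 29 ≤ v := by
    have : 3 ^ 3 ≤ 3 ^ m := Nat.pow_le_pow_right (by norm_num) (by omega)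
    simp only [hvdef]; omega
  -- v ≡ 11 mod Q
  have hmod : 11 ≡ v [MOD Q] := by
    have h1 : 3 ^ t ≡ 1 [MOD Q] := Nat.ModEq.pow_totient hcop
    have h2 : 3 ^ m = 9 * 3 ^ t := by rw [hmdef, pow_add]; norm_num
    calc 11 = 2 + 9 * 1 := by norm_num
    _ ≡ 2 + 9 * 3 ^ t [MOD Q] := Nat.ModEq.add_left 2 ((Nat.ModEq.mul_left 9 h1).symm)
    _ = v := by rw [hvdef, h2]
  have hQdvd : Q ∣ v - 11 := (Nat.modEq_iff_dvd' (by omega)).mp hmod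
  -- every prime factor of v is 11
  have key : ∀ {d : ℕ}, d.Prime → d ∣ v → d = 11 := by
    intro d hd hdv
    have hdF : d ∈ F := by
      apply hmemF d hd
      refine ⟨m, by omega, ?_⟩
      have h1 : (d : ℤ) ∣ (v : ℤ) := Int.natCast_dvd_natCast.mpr hdv
      rw [hvdef] at h1
      push_cast at h1
      exact h1
    have hd2Q : d ^ 2 ∣ Q := Finset.dvd_prod_of_mem (fun p => p ^ 2) hdF
    have hddvd11 : d ∣ 11 := by
      have h1 : d ∣ v - 11 := dvd_trans (dvd_trans (dvd_pow_self d (by norm_num)) hd2Q) hQdvd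
      have := Nat.dvd_sub hdv h1
      rwa [show v - (v - 11) = 11 by omega] at this
    exact (Nat.prime_dvd_prime_iff_eq hd (by norm_num)).mp hddvd11
  obtain hvpow := Nat.eq_prime_pow_of_unique_prime_dvd (n := v) (p := 11) (by omega) key
  set L := v.primeFactorsList.length with hL
  have h121v : 121 ∣ v := by
    rcases L with _ | _ | L
    · omega
    · omega
    · rw [hvpow, pow_succ, pow_succ]
      exact ⟨11 ^ L, by ring⟩
  have h121Q : 121 ∣ Q := by
    have := Finset.dvd_prod_of_mem (fun p => p ^ 2) h11
    simpa using this
  have : (121 : ℕ) ∣ 11 := by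
    have h1 : 121 ∣ v - 11 := dvd_trans h121Q hQdvd
    have := Nat.dvd_sub h121v h1
    rwa [show v - (v - 11) = 11 by omega] at this
  omega

theorem torsion_primes_infinite_with_infinite_complement :
    {p : ℕ | p.Prime ∧ ∃ m : ℕ, 2 ≤ m ∧ (p : ℤ) ∣ 2 + 3 ^ m}.Infinite ∧
    {p : ℕ | p.Prime ∧ ¬ ∃ m : ℕ, 2 ≤ m ∧ (p : ℤ) ∣ 2 + 3 ^ m}.Infinite := by
  constructor
  · exact aux_part1
  · have hdir : {p : ℕ | p.Prime ∧ (p : ZMod 24) = 13}.Infinite :=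
      Nat.infinite_setOfPred_prime_and_eq_mod (a := (13 : ZMod 24)) (by decide)
    apply hdir.mono
    rintro p ⟨hp, hcast⟩
    refine ⟨hp, aux_no_div_13 p hp ?_⟩
    have := (ZMod.natCast_eq_natCast_iff p 13 24).mp (by exact_mod_cast hcast)
    have h : p % 24 = 13 % 24 := this
    omega
end
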